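/- arXiv:1905.04114 — 5 statements merged into one kernel-verified Lean document; each statement's English description precedes it below -/
import Mathlib

section
/- Let es_i be defined recursively along a route by es_i = min over time windows p of visit i with u^p_i ≥ es_{pre(i)} + t (where t is the travel time from the predecessor) of max(es_{pre(i)} + t, l^p_i), with base case es_i = min_p l^p_i for the first visit. Then es_i is the minimum over all feasible schedules (assignments of service start times a_j respecting a_j ≥ a_{pre(j)} + t_{pre(j),j} and a_j lying in some time window of j) of the service start time a_i at visit i. -/
open Finset

/-- The forward recursion over multiple time windows computes, at every
visit, the minimum service start time over all feasible schedules. -/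
theorem earliest_start_recursion_is_least
    (n : ℕ) (hn : 0 < n)
    (W : ℕ → Finset (ℝ × ℝ))
    (hWne : ∀ i, i < n → (W i).Nonempty)
    (hWlu : ∀ i, i < n → ∀ w ∈ W i, w.1 ≤ w.2)
    (t : ℕ → ℝ) (ht : ∀ i, 0 ≤ t i)
    (Feasible : (ℕ → ℝ) → Prop)
    (hFeasible : ∀ a, Feasible a ↔
      ((∀ i, i < n → ∃ w ∈ W i, w.1 ≤ a i ∧ a i ≤ w.2) ∧
        (∀ i, i + 1 < n → a i + t i ≤ a (i + 1))))
    (hex : ∃ a, Feasible a)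
    (es : ℕ → ℝ)
    (hes0 : es 0 = ((W 0).image Prod.fst).min' ((hWne 0 hn).image Prod.fst))
    (hrec : ∀ i, i + 1 < n →
      ∃ hne : ((W (i + 1)).filter (fun w => es i + t i ≤ w.2)).Nonempty,
        es (i + 1) =
          ((W (i + 1)).filter (fun w => es i + t i ≤ w.2)).inf' hne
            (fun w => max (es i + t i) w.1)) :
    ∀ i, i < n → IsLeast {x : ℝ | ∃ a, Feasible a ∧ a i = x} (es i) := by
  classical
  have h0 : ∃ w ∈ W 0, w.1 = es 0 := by
    have := Finset.min'_mem ((W 0).image Prod.fst) ((hWne 0 hn).image Prod.fst)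
    rw [← hes0] at this
    simpa using this
  have hstep : ∀ i, i + 1 < n → ∃ w ∈ W (i + 1),
      w.1 ≤ es (i + 1) ∧ es (i + 1) ≤ w.2 := by
    intro i hi
    obtain ⟨hne, heq⟩ := hrec i hi
    obtain ⟨w, hw, hweq⟩ := Finset.exists_mem_eq_inf' hne (fun w => max (es i + t i) w.1)
    simp only [Finset.mem_filter] at hw
    refine ⟨w, hw.1, ?_, ?_⟩
    · rw [heq, hweq]; exact le_max_right _ _
    · rw [heq, hweq]; exact max_le hw.2 (hWlu (i + 1) hi w hw.1)
  have hmono : ∀ i, i + 1 < n → es i + t i ≤ es (i + 1) := by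
    intro i hi
    obtain ⟨hne, heq⟩ := hrec i hi
    rw [heq]
    exact Finset.le_inf' _ _ (fun w _ => le_max_left _ _)
  have lb : ∀ a, Feasible a → ∀ i, i < n → es i ≤ a i := by
    intro a ha
    rw [hFeasible] at ha
    obtain ⟨hwin, htr⟩ := ha
    intro i
    induction i with
    | zero =>
      intro hi
      obtain ⟨w, hw, h1, _⟩ := hwin 0 hi
      rw [hes0]
      exact le_trans (Finset.min'_le _ _ (Finset.mem_image_of_mem Prod.fst hw)) h1
    | succ i ih =>
      intro hi
      have hi' : i < n := Nat.lt_of_succ_lt hi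
      have hes := ih hi'
      obtain ⟨hne, heq⟩ := hrec i hi
      obtain ⟨w, hw, h1, h2⟩ := hwin (i + 1) hi
      have ht' : a i + t i ≤ a (i + 1) := htr i hi
      have key : es i + t i ≤ a (i + 1) := le_trans (add_le_add_left hes _) ht'
      have hwf : w ∈ (W (i + 1)).filter (fun w => es i + t i ≤ w.2) := by
        simp only [Finset.mem_filter]
        exact ⟨hw, le_trans key h2⟩
      rw [heq]
      exact le_trans (Finset.inf'_le _ hwf) (max_le key h1)
  intro i hi
  constructor
  · obtain ⟨b, hb⟩ := hex
    refine ⟨fun j => if j ≤ i then es j else b j, ?_, by simp⟩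
    have hb' := (hFeasible b).mp hb
    rw [hFeasible]
    constructor
    · intro j hj
      by_cases hji : j ≤ i
      · simp only [if_pos hji]
        cases j with
        | zero =>
          obtain ⟨w, hw, hweq⟩ := h0
          exact ⟨w, hw, le_of_eq hweq, hweq ▸ hWlu 0 hj w hw⟩
        | succ k =>
          obtain ⟨w, hw, h1, h2⟩ := hstep k hj
          exact ⟨w, hw, h1, h2⟩
      · simp only [if_neg hji]
        exact hb'.1 j hj
    · intro j hj
      by_cases hj1 : j + 1 ≤ i
      · have hj0 : j ≤ i := le_trans (Nat.le_succ j) hj1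
        simp only [if_pos hj1, if_pos hj0]
        exact hmono j (lt_of_le_of_lt hj1 hi)
      · by_cases hj0 : j ≤ i
        · have hji : j = i := le_antisymm hj0 (by omega)
          simp only [if_pos hj0, if_neg hj1]
          subst hji
          calc es j + t j ≤ b j + t j := add_le_add_left (lb b hb j hi) _
            _ ≤ b (j + 1) := hb'.2 j hj
        · simp only [if_neg hj0, if_neg hj1]
          exact hb'.2 j hj
  · rintro x ⟨a, ha, rfl⟩
    exact lb a ha i hi
end

section
/- Forward-label dominance implies cost dominance: if two forward labels (ls_i, fs_i, et_i) and (ls_j, fs_j, et_j) at the same visit satisfy et_i − fs_i ≤ et_j − fs_j, et_i ≤ et_j, and ls_i ≥ ls_j, then for any backward label (es, bs, st) at the predecessor with es ≤ ls_i, the route duration et_i − st − min(ls_i − es, bs + fs_i) is at most et_j − st − min(ls_j − es, bs + fs_j). -/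
/-- Forward-label dominance implies cost dominance: if
`(ls_i, fs_i, et_i)` dominates `(ls_j, fs_j, et_j)` (i.e. `et_i − fs_i ≤ et_j − fs_j`,
`et_i ≤ et_j` and `ls_i ≥ ls_j`), then for every backward label `(es, bs, st)` with
`es ≤ ls_i`, the route duration obtained from the first label is at most that
from the second. -/
theorem forward_label_dominance_cost
    (ls_i fs_i et_i ls_j fs_j et_j es bs st : ℝ)
    (hfsi : 0 ≤ fs_i) (hfsj : 0 ≤ fs_j) (hbs : 0 ≤ bs)
    (hdom1 : et_i - fs_i ≤ et_j - fs_j)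
    (hdom2 : et_i ≤ et_j)
    (hdom3 : ls_j ≤ ls_i)
    (hfeas : es ≤ ls_i) :
    et_i - st - min (ls_i - es) (bs + fs_i) ≤ et_j - st - min (ls_j - es) (bs + fs_j) := by
  rcases le_total (ls_i - es) (bs + fs_i) with h | h
  · rw [min_eq_left h]
    have := min_le_left (ls_j - es) (bs + fs_j)
    linarith
  · rw [min_eq_right h]
    have := min_le_right (ls_j - es) (bs + fs_j)
    linarith
end

section
/- The latest start times ls computed by the backward recursion ls_i = max over windows p of visit i with l^p_i ≤ ls_{suc(i)} − t_{i,suc(i)} of min(ls_{suc(i)} − t_{i,suc(i)}, u^p_i), with base case ls_i = max_p u^p_i for the last visit, give the maximum over all feasible schedules of the start time at visit i. -/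
open Finset

/-- The backward recursion over multiple time windows computes, at every
visit, the maximum service start time over all feasible schedules. -/
theorem latest_start_recursion_is_greatest
    (n : ℕ) (hn : 0 < n)
    (W : ℕ → Finset (ℝ × ℝ))
    (hWne : ∀ i, i < n → (W i).Nonempty)
    (hWlu : ∀ i, i < n → ∀ w ∈ W i, w.1 ≤ w.2)
    (t : ℕ → ℝ) (ht : ∀ i, 0 ≤ t i)
    (Feasible : (ℕ → ℝ) → Prop)
    (hFeasible : ∀ a, Feasible a ↔
      ((∀ i, i < n → ∃ w ∈ W i, w.1 ≤ a i ∧ a i ≤ w.2) ∧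
        (∀ i, i + 1 < n → a i + t i ≤ a (i + 1))))
    (hex : ∃ a, Feasible a)
    (ls : ℕ → ℝ)
    (hlsLast : ls (n - 1) = ((W (n - 1)).image Prod.snd).max'
      ((hWne (n - 1) (Nat.sub_lt hn one_pos)).image Prod.snd))
    (hrec : ∀ i, i + 1 < n →
      ∃ hne : ((W i).filter (fun w => w.1 ≤ ls (i + 1) - t i)).Nonempty,
        ls i = ((W i).filter (fun w => w.1 ≤ ls (i + 1) - t i)).sup' hne
          (fun w => min (ls (i + 1) - t i) w.2)) :
    ∀ i, i < n → IsGreatest {x : ℝ | ∃ a, Feasible a ∧ a i = x} (ls i) := by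
  -- ls i lies in some window of visit i
  have hmemls : ∀ i, i < n → ∃ w ∈ W i, w.1 ≤ ls i ∧ ls i ≤ w.2 := by
    intro i hi
    rcases Nat.lt_or_ge (i + 1) n with h | h
    · obtain ⟨hne, heq⟩ := hrec i h
      obtain ⟨w, hw, hwv⟩ := Finset.exists_mem_eq_sup' hne
        (fun w => min (ls (i + 1) - t i) w.2)
      rw [Finset.mem_filter] at hw
      refine ⟨w, hw.1, ?_, ?_⟩
      · rw [heq, hwv]; exact le_min hw.2 (hWlu i hi w hw.1)
      · rw [heq, hwv]; exact min_le_right _ _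
    · have hi' : i = n - 1 := by omega
      subst hi'
      have hmax := Finset.max'_mem _ ((hWne (n - 1) (Nat.sub_lt hn one_pos)).image Prod.snd)
      rw [Finset.mem_image] at hmax
      obtain ⟨w, hw, hwv⟩ := hmax
      exact ⟨w, hw, by rw [hlsLast, ← hwv]; exact hWlu _ (Nat.sub_lt hn one_pos) w hw,
        by rw [hlsLast, ← hwv]⟩
  -- chaining of ls
  have hchain : ∀ i, i + 1 < n → ls i + t i ≤ ls (i + 1) := by
    intro i hi
    obtain ⟨hne, heq⟩ := hrec i hi
    have : ls i ≤ ls (i + 1) - t i := by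
      rw [heq]
      exact Finset.sup'_le hne _ (fun w _ => min_le_left _ _)
    linarith
  -- upper bound, by induction on distance to the end
  have hup : ∀ k, ∀ i, i + 1 + k = n → ∀ a, Feasible a → a i ≤ ls i := by
    intro k
    induction k with
    | zero =>
      intro i hi a ha
      have hi' : i = n - 1 := by omega
      obtain ⟨hwin, _⟩ := (hFeasible a).mp ha
      obtain ⟨w, hw, hlw, huw⟩ := hwin i (by omega)
      subst hi'
      rw [hlsLast]
      refine le_trans huw (Finset.le_max' _ _ ?_)
      exact Finset.mem_image.mpr ⟨w, hw, rfl⟩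
    | succ k ih =>
      intro i hi a ha
      have hi1 : i + 1 < n := by omega
      have hIH : a (i + 1) ≤ ls (i + 1) := ih (i + 1) (by omega) a ha
      obtain ⟨hwin, htrav⟩ := (hFeasible a).mp ha
      obtain ⟨w, hw, hlw, huw⟩ := hwin i (by omega)
      have hale : a i ≤ ls (i + 1) - t i := by
        have := htrav i hi1; linarith
      obtain ⟨hne, heq⟩ := hrec i hi1
      rw [heq]
      have hwf : w ∈ (W i).filter (fun w => w.1 ≤ ls (i + 1) - t i) :=
        Finset.mem_filter.mpr ⟨hw, le_trans hlw hale⟩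
      calc a i ≤ min (ls (i + 1) - t i) w.2 := le_min hale huw
        _ ≤ _ := Finset.le_sup' (fun w => min (ls (i + 1) - t i) w.2) hwf
  intro i hi
  constructor
  · -- ls i is attained by a feasible schedule
    obtain ⟨a, ha⟩ := hex
    obtain ⟨hwin, htrav⟩ := (hFeasible a).mp ha
    refine ⟨fun j => if j < i then a j else ls j, ?_, by simp⟩
    rw [hFeasible]
    constructor
    · intro j hj
      by_cases hji : j < i
      · simpa [hji] using hwin j hj
      · simpa [hji] using hmemls j hj
    · intro j hj
      by_cases hji : j < i
      · by_cases hj1 : j + 1 < i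
        · simpa [hji, hj1] using htrav j hj
        · have hj1i : j + 1 = i := by omega
          have h1 : a j + t j ≤ a (j + 1) := htrav j hj
          have h2 : a i ≤ ls i := hup (n - i - 1) i (by omega) a ha
          simp only [hji, if_true, hj1, if_false]
          rw [hj1i] at h1 ⊢
          linarith
      · have hj1 : ¬ j + 1 < i := by omega
        simpa [hji, hj1] using hchain j hj
  · rintro x ⟨a, ha, rfl⟩
    exact hup (n - i - 1) i (by omega) a ha
end

section
/- A route admits a feasible schedule if and only if es_i ≤ ls_i for every visit i, where es_i and ls_i are the earliest and latest start times computed by the forward and backward recursions over the multiple time windows (with the convention that es_i = +∞ or ls_i = −∞ when no compatible window exists). -/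
open Finset

/-- A route admits a feasible schedule if and only if `es i ≤ ls i`
for every visit `i`, where `es` and `ls` are the forward and backward recursions over the
multiple time windows, computed in `EReal` so that `es i = ⊤` (resp. `ls i = ⊥`) when no
compatible window exists. -/
theorem route_feasible_iff_es_le_ls
    (n : ℕ) (hn : 0 < n)
    (W : ℕ → Finset (ℝ × ℝ))
    (hWne : ∀ i, i < n → (W i).Nonempty)
    (hWlu : ∀ i, i < n → ∀ w ∈ W i, w.1 ≤ w.2)
    (t : ℕ → ℝ) (ht : ∀ i, 0 ≤ t i)
    (Feasible : (ℕ → ℝ) → Prop)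
    (hFeasible : ∀ a, Feasible a ↔
      ((∀ i, i < n → ∃ w ∈ W i, w.1 ≤ a i ∧ a i ≤ w.2) ∧
        (∀ i, i + 1 < n → a i + t i ≤ a (i + 1))))
    (es ls : ℕ → EReal)
    (hes0 : es 0 = (W 0).inf (fun w => (w.1 : EReal)))
    (hesrec : ∀ i, i + 1 < n →
      es (i + 1) = ((W (i + 1)).filter (fun w => es i + (t i : EReal) ≤ (w.2 : EReal))).inf
        (fun w => max (es i + (t i : EReal)) (w.1 : EReal)))
    (hlsLast : ls (n - 1) = (W (n - 1)).sup (fun w => (w.2 : EReal)))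
    (hlsrec : ∀ i, i + 1 < n →
      ls i = ((W i).filter (fun w => (w.1 : EReal) ≤ ls (i + 1) - (t i : EReal))).sup
        (fun w => min (ls (i + 1) - (t i : EReal)) (w.2 : EReal))) :
    (∃ a, Feasible a) ↔ (∀ i, i < n → es i ≤ ls i) := by
  -- es is either ⊤ or a real
  have hesTR : ∀ i, i < n → es i = ⊤ ∨ ∃ x : ℝ, es i = (x : EReal) := by
    intro i
    induction i with
    | zero =>
      intro _
      obtain ⟨w, hw, he⟩ := Finset.exists_mem_eq_inf (W 0) (hWne 0 hn) (fun w => (w.1 : EReal))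
      right; exact ⟨w.1, by rw [hes0, he]⟩
    | succ k ih =>
      intro hk1
      rw [hesrec k hk1]
      by_cases hfe : ((W (k + 1)).filter (fun w => es k + (t k : EReal) ≤ (w.2 : EReal))).Nonempty
      · obtain ⟨w, hw, he⟩ := Finset.exists_mem_eq_inf _ hfe
          (fun w => max (es k + (t k : EReal)) (w.1 : EReal))
        rcases ih (Nat.lt_of_succ_lt hk1) with htop | ⟨x, hx⟩
        · left; rw [he, htop]; simp [EReal.top_add_coe]
        · right
          refine ⟨max (x + t k) w.1, ?_⟩
          rw [he, hx, ← EReal.coe_add]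
          exact (Monotone.map_max (fun _ _ h => EReal.coe_le_coe_iff.mpr h)).symm
      · left
        rw [Finset.not_nonempty_iff_eq_empty.mp hfe, Finset.inf_empty]
  -- ls is never ⊤
  have hlsnt : ∀ i, i < n → ls i ≠ ⊤ := by
    intro i hi
    rcases eq_or_lt_of_le (Nat.le_sub_one_of_lt hi) with heq | hlt
    · rw [heq, hlsLast]
      obtain ⟨w, hw, he⟩ := Finset.exists_mem_eq_sup (W (n-1)) (hWne (n-1) (by omega))
        (fun w => (w.2 : EReal))
      rw [he]; exact EReal.coe_ne_top _
    · have hi1 : i + 1 < n := by omega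
      rw [hlsrec i hi1]
      by_cases hfe : ((W i).filter (fun w => (w.1 : EReal) ≤ ls (i+1) - (t i : EReal))).Nonempty
      · obtain ⟨w, hw, he⟩ := Finset.exists_mem_eq_sup _ hfe
          (fun w => min (ls (i + 1) - (t i : EReal)) (w.2 : EReal))
        rw [he]
        exact ne_top_of_le_ne_top (EReal.coe_ne_top w.2) (min_le_right _ _)
      · rw [Finset.not_nonempty_iff_eq_empty.mp hfe, Finset.sup_empty]
        exact bot_ne_top
  constructor
  · rintro ⟨a, ha⟩
    obtain ⟨haw, hac⟩ := (hFeasible a).mp ha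
    -- es i ≤ a i
    have h1 : ∀ i, i < n → es i ≤ (a i : EReal) := by
      intro i
      induction i with
      | zero =>
        intro _
        obtain ⟨w, hw, hw1, hw2⟩ := haw 0 hn
        rw [hes0]
        exact le_trans (Finset.inf_le hw) (EReal.coe_le_coe_iff.mpr hw1)
      | succ k ih =>
        intro hk1
        obtain ⟨w, hw, hw1, hw2⟩ := haw (k+1) hk1
        have hes_le : es k + (t k : EReal) ≤ (a (k+1) : EReal) := by
          calc es k + (t k : EReal) ≤ (a k : EReal) + (t k : EReal) :=
                add_le_add_left (ih (Nat.lt_of_succ_lt hk1)) _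
            _ = ((a k + t k : ℝ) : EReal) := (EReal.coe_add _ _).symm
            _ ≤ (a (k+1) : EReal) := EReal.coe_le_coe_iff.mpr (hac k hk1)
        have hwf : w ∈ (W (k+1)).filter (fun w => es k + (t k : EReal) ≤ (w.2 : EReal)) :=
          Finset.mem_filter.mpr ⟨hw, le_trans hes_le (EReal.coe_le_coe_iff.mpr hw2)⟩
        rw [hesrec k hk1]
        exact le_trans (Finset.inf_le hwf)
          (max_le hes_le (EReal.coe_le_coe_iff.mpr hw1))
    -- a i ≤ ls i (backward)
    have h2 : ∀ j, j < n → (a (n - 1 - j) : EReal) ≤ ls (n - 1 - j) := by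
      intro j
      induction j with
      | zero =>
        intro _
        obtain ⟨w, hw, hw1, hw2⟩ := haw (n-1) (by omega)
        simp only [Nat.sub_zero]
        rw [hlsLast]
        exact le_trans (EReal.coe_le_coe_iff.mpr hw2) (Finset.le_sup (f := fun w => (w.2 : EReal)) hw)
      | succ k ih =>
        intro hk1
        set i := n - 1 - (k + 1) with hi
        have hieq : n - 1 - k = i + 1 := by omega
        have hi1 : i + 1 < n := by omega
        have hIH : (a (i+1) : EReal) ≤ ls (i+1) := by
          have := ih (by omega); rwa [hieq] at this
        obtain ⟨w, hw, hw1, hw2⟩ := haw i (by omega)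
        have hale : (a i : EReal) ≤ ls (i+1) - (t i : EReal) := by
          calc (a i : EReal) = ((a i + t i - t i : ℝ) : EReal) := by norm_num
            _ = ((a i + t i : ℝ) : EReal) - (t i : EReal) := EReal.coe_sub _ _
            _ ≤ ls (i+1) - (t i : EReal) := by
                refine EReal.sub_le_sub ?_ le_rfl
                exact le_trans (EReal.coe_le_coe_iff.mpr (hac i hi1)) hIH
        have hwf : w ∈ (W i).filter (fun w => (w.1 : EReal) ≤ ls (i+1) - (t i : EReal)) :=
          Finset.mem_filter.mpr ⟨hw, le_trans (EReal.coe_le_coe_iff.mpr hw1) hale⟩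
        rw [hlsrec i hi1]
        exact le_trans (le_min hale (EReal.coe_le_coe_iff.mpr hw2)) (Finset.le_sup (f := fun w => min (ls (i + 1) - (t i : EReal)) (w.2 : EReal)) hwf)
    intro i hi
    have hj : n - 1 - (n - 1 - i) = i := by omega
    have := h2 (n - 1 - i) (by omega)
    rw [hj] at this
    exact le_trans (h1 i hi) this
  · intro H
    -- es i is real for i < n
    have hreal : ∀ i, i < n → es i = (((es i).toReal : ℝ) : EReal) := by
      intro i hi
      rcases hesTR i hi with htop | ⟨x, hx⟩
      · exact absurd (top_le_iff.mp (htop ▸ H i hi)) (hlsnt i hi)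
      · rw [hx, EReal.toReal_coe]
    refine ⟨fun i => (es i).toReal, (hFeasible _).mpr ⟨?_, ?_⟩⟩
    · intro i hi
      match i with
      | 0 =>
        obtain ⟨w, hw, he⟩ := Finset.exists_mem_eq_inf (W 0) (hWne 0 hn) (fun w => (w.1 : EReal))
        have : es 0 = (w.1 : EReal) := by rw [hes0, he]
        refine ⟨w, hw, ?_, ?_⟩
        · rw [this, EReal.toReal_coe]
        · rw [this, EReal.toReal_coe]; exact hWlu 0 hn w hw
      | (k+1) =>
        have hk1 : k + 1 < n := hi
        have hfe : ((W (k+1)).filter (fun w => es k + (t k : EReal) ≤ (w.2 : EReal))).Nonempty := by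
          by_contra hc
          have : es (k+1) = ⊤ := by
            rw [hesrec k hk1, Finset.not_nonempty_iff_eq_empty.mp hc, Finset.inf_empty]
          exact absurd (top_le_iff.mp (this ▸ H (k+1) hk1)) (hlsnt (k+1) hk1)
        obtain ⟨w, hwf, he⟩ := Finset.exists_mem_eq_inf _ hfe
          (fun w => max (es k + (t k : EReal)) (w.1 : EReal))
        obtain ⟨hw, hwt⟩ := Finset.mem_filter.mp hwf
        have heq : es (k+1) = max (es k + (t k : EReal)) (w.1 : EReal) := by
          rw [hesrec k hk1, he]
        refine ⟨w, hw, ?_, ?_⟩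
        · have h1 : (w.1 : EReal) ≤ es (k+1) := heq ▸ le_max_right _ _
          rw [hreal (k+1) hk1] at h1
          exact EReal.coe_le_coe_iff.mp h1
        · have h2 : es (k+1) ≤ (w.2 : EReal) := by
            rw [heq]
            exact max_le hwt (EReal.coe_le_coe_iff.mpr (hWlu (k+1) hk1 w hw))
          rw [hreal (k+1) hk1] at h2
          exact EReal.coe_le_coe_iff.mp h2
    · intro i hi1
      have hile : es i + (t i : EReal) ≤ es (i+1) := by
        rw [hesrec i hi1]
        exact Finset.le_inf (fun w hw => le_max_left _ _)
      have : (((es i).toReal + t i : ℝ) : EReal) ≤ (((es (i+1)).toReal : ℝ) : EReal) := by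
        rw [EReal.coe_add, ← hreal i (Nat.lt_of_succ_lt hi1), ← hreal (i+1) hi1]
        exact hile
      exact EReal.coe_le_coe_iff.mp this
end

section
/- The search space of the VRP with unlimited vehicles is connected under the single-visit move neighbourhood: for any two feasible solutions s and s' (partitions of the visit set into feasibly schedulable ordered routes), there is a finite sequence of solutions from s to s', each obtained from the previous by removing a single visit from its route and inserting it into another (possibly new) route, with all intermediate solutions feasible. -/
/-- A route is feasible if there is a schedule respecting time windows and travel times. -/
def FeasRoute {V : Type*} (W : V → Set ℝ) (t : V → V → ℝ) (r : List V) : Prop :=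
  ∃ a : ℕ → ℝ,
    (∀ (i : ℕ) (h : i < r.length), a i ∈ W (r.get ⟨i, h⟩)) ∧
    (∀ (i : ℕ) (h : i + 1 < r.length),
      a i + t (r.get ⟨i, Nat.lt_of_succ_lt h⟩) (r.get ⟨i + 1, h⟩) ≤ a (i + 1))

/-- A feasible solution: a multiset of nonempty feasible routes whose visits, taken
together, cover the whole visit set exactly once. -/
def FeasSol {V : Type*} [Fintype V] (W : V → Set ℝ) (t : V → V → ℝ)
    (S : Multiset (List V)) : Prop :=
  (∀ r ∈ S, r ≠ [] ∧ FeasRoute W t r) ∧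
  S.bind (fun r => (r : Multiset V)) = (Finset.univ : Finset V).val

/-- A single-visit move: remove one visit `v` from its route (deleting the route if it
becomes empty) and reinsert it at any position of another route or of a brand new route. -/
def MoveStep {V : Type*} [DecidableEq V] (S S' : Multiset (List V)) : Prop :=
  ∃ (v : V) (r1 r2 q1 q2 : List V),
    (r1 ++ v :: r2) ∈ S ∧
    ∃ T : Multiset (List V),
      T = (if r1 ++ r2 = [] then S.erase (r1 ++ v :: r2)
           else (r1 ++ r2) ::ₘ S.erase (r1 ++ v :: r2)) ∧
      ((q1 ++ q2) ∈ T ∨ q1 ++ q2 = []) ∧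
      S' = (q1 ++ v :: q2) ::ₘ T.erase (q1 ++ q2)

section Aux
variable {V : Type*} [Fintype V] [DecidableEq V] (W : V → Set ℝ) (t : V → V → ℝ)

lemma feas_singleton (hsingle : ∀ v : V, (W v).Nonempty) (v : V) :
    FeasRoute W t [v] := by
  obtain ⟨x, hx⟩ := hsingle v
  refine ⟨fun _ => x, fun i h => ?_, fun i h => ?_⟩
  · have : i = 0 := by simpa using h
    subst this; simpa using hx
  · simp at h

lemma feas_tail {v : V} {r : List V} (h : FeasRoute W t (v :: r)) : FeasRoute W t r := by
  obtain ⟨a, h1, h2⟩ := h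
  refine ⟨fun i => a (i + 1), fun i hi => ?_, fun i hi => ?_⟩
  · have := h1 (i + 1) (by simpa using Nat.succ_lt_succ hi)
    simpa using this
  · have := h2 (i + 1) (by simpa using Nat.succ_lt_succ hi)
    simpa using this

lemma moveStep_symm {S S' : Multiset (List V)} (hS : FeasSol W t S)
    (h : MoveStep S S') : MoveStep S' S := by
  obtain ⟨v, r1, r2, q1, q2, hmem, T, hT, hq, hS'⟩ := h
  have hne : ∀ r ∈ T, r ≠ [] := by
    intro r hr
    rw [hT] at hr
    split_ifs at hr with h0
    · exact (hS.1 r (Multiset.mem_of_mem_erase hr)).1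
    · rcases Multiset.mem_cons.mp hr with rfl | hr
      · exact h0
      · exact (hS.1 r (Multiset.mem_of_mem_erase hr)).1
  have hnilT : ([] : List V) ∉ T := fun hm => hne _ hm rfl
  refine ⟨v, q1, q2, r1, r2, by rw [hS']; exact Multiset.mem_cons_self _ _, T, ?_, ?_, ?_⟩
  · rw [hS', Multiset.erase_cons_head]
    by_cases h0 : q1 ++ q2 = []
    · rw [if_pos h0, h0]
      exact (Multiset.erase_of_notMem hnilT).symm
    · rw [if_neg h0]
      exact (Multiset.cons_erase (hq.resolve_right h0)).symm
  · by_cases h0 : r1 ++ r2 = []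
    · exact Or.inr h0
    · rw [hT, if_neg h0]
      exact Or.inl (Multiset.mem_cons_self _ _)
  · by_cases h0 : r1 ++ r2 = []
    · rw [h0, Multiset.erase_of_notMem hnilT, hT, if_pos h0,
        Multiset.cons_erase hmem]
    · rw [hT, if_neg h0, Multiset.erase_cons_head, Multiset.cons_erase hmem]

lemma chain_rev {S S' : Multiset (List V)} (hS : FeasSol W t S)
    (h : Relation.ReflTransGen (fun A B => MoveStep A B ∧ FeasSol W t B) S S') :
    FeasSol W t S' ∧
      Relation.ReflTransGen (fun A B => MoveStep A B ∧ FeasSol W t B) S' S := by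
  induction h with
  | refl => exact ⟨hS, .refl⟩
  | tail _ hstep ih =>
    obtain ⟨hm, hfb⟩ := hstep
    exact ⟨hfb, Relation.ReflTransGen.head ⟨moveStep_symm W t ih.1 hm, ih.1⟩ ih.2⟩

lemma card_le_sol {S : Multiset (List V)} (hS : FeasSol W t S) :
    Multiset.card S ≤ Fintype.card V := by
  have h1 : Multiset.card (S.bind (fun r => (r : Multiset V))) = Fintype.card V := by
    rw [hS.2]; rfl
  rw [Multiset.card_bind] at h1
  refine le_trans ?_ h1.le
  have hc : Multiset.card S = (Multiset.map (fun _ : List V => (1:ℕ)) S).sum := by simp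
  rw [hc]
  apply Multiset.sum_map_le_sum_map
  intro r hr
  simpa [Nat.one_le_iff_ne_zero] using (hS.1 r hr).1

lemma split_step {S : Multiset (List V)} (hS : FeasSol W t S)
    (hsingle : ∀ v : V, (W v).Nonempty)
    {v : V} {rest : List V} (hrest : rest ≠ []) (hmem : (v :: rest) ∈ S) :
    MoveStep S ([v] ::ₘ rest ::ₘ S.erase (v :: rest)) ∧
    FeasSol W t ([v] ::ₘ rest ::ₘ S.erase (v :: rest)) := by
  have hnilT : ([] : List V) ∉ (rest ::ₘ S.erase (v :: rest)) := by
    intro hm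
    rcases Multiset.mem_cons.mp hm with h | h
    · exact hrest h.symm
    · exact (hS.1 [] (Multiset.mem_of_mem_erase h)).1 rfl
  constructor
  · refine ⟨v, [], rest, [], [], by simpa using hmem,
      rest ::ₘ S.erase (v :: rest), ?_, Or.inr rfl, ?_⟩
    · simp [hrest]
    · simp [Multiset.erase_of_notMem hnilT]
  · constructor
    · intro r hr
      rcases Multiset.mem_cons.mp hr with rfl | hr
      · exact ⟨by simp, feas_singleton W t hsingle v⟩
      rcases Multiset.mem_cons.mp hr with rfl | hr
      · exact ⟨hrest, feas_tail W t (hS.1 _ hmem).2⟩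
      · exact hS.1 r (Multiset.mem_of_mem_erase hr)
    · have hS2 : S = (v :: rest) ::ₘ S.erase (v :: rest) := (Multiset.cons_erase hmem).symm
      have hb := hS.2
      rw [hS2, Multiset.cons_bind] at hb
      rw [Multiset.cons_bind, Multiset.cons_bind, ← add_assoc, ← hb]
      congr 1

lemma all_singleton_eq {S : Multiset (List V)} (hS : FeasSol W t S)
    (hall : ∀ r ∈ S, r.length = 1) :
    S = (Finset.univ : Finset V).val.map (fun v => [v]) := by
  have key : ∀ S : Multiset (List V), (∀ r ∈ S, r.length = 1) →
      (S.bind (fun r => (r : Multiset V))).map (fun v => [v]) = S := by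
    intro S
    induction S using Multiset.induction with
    | empty => intro _; simp
    | cons r S ih =>
      intro h
      obtain ⟨x, rfl⟩ := List.length_eq_one_iff.mp (h r (Multiset.mem_cons_self r S))
      rw [Multiset.cons_bind]
      simp [ih (fun r hr => h r (Multiset.mem_cons_of_mem hr))]
  rw [← key S hall, hS.2]

lemma reach_canonical (hsingle : ∀ v : V, (W v).Nonempty) :
    ∀ n (S : Multiset (List V)), FeasSol W t S →
      Fintype.card V - Multiset.card S = n →
      Relation.ReflTransGen (fun A B => MoveStep A B ∧ FeasSol W t B) S
        ((Finset.univ : Finset V).val.map (fun v => [v])) := by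
  intro n
  induction n using Nat.strong_induction_on with
  | _ n ih =>
    intro S hS hn
    by_cases hall : ∀ r ∈ S, r.length = 1
    · rw [all_singleton_eq W t hS hall]
    · push_neg at hall
      obtain ⟨r, hr, hlen⟩ := hall
      obtain ⟨hne, -⟩ := hS.1 r hr
      obtain ⟨v, rest, rfl⟩ := List.exists_cons_of_ne_nil hne
      have hrest : rest ≠ [] := by
        intro h; subst h; simp at hlen
      obtain ⟨hmv, hfeas⟩ := split_step W t hS hsingle hrest hr
      set S2 := [v] ::ₘ rest ::ₘ S.erase (v :: rest) with hS2def
      have hcard : Multiset.card S2 = Multiset.card S + 1 := by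
        have : (v :: rest) ∈ S := hr
        have hpos : 0 < Multiset.card S := Multiset.card_pos_iff_exists_mem.mpr ⟨_, hr⟩
        rw [hS2def]
        simp only [Multiset.card_cons, Multiset.card_erase_of_mem this, Nat.pred_eq_sub_one]
        omega
      have hle : Multiset.card S2 ≤ Fintype.card V := card_le_sol W t hfeas
      have hlt : Fintype.card V - Multiset.card S2 < n := by omega
      exact Relation.ReflTransGen.head ⟨hmv, hfeas⟩
        (ih _ hlt S2 hfeas rfl)

end Aux

/-- With an unlimited number of vehicles, the space of feasible solutions
is connected under the single-visit move neighbourhood: any feasible solution can be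
transformed into any other by a finite sequence of single-visit moves, all intermediate
solutions being feasible. -/
theorem search_space_connected
    {V : Type*} [Fintype V] [DecidableEq V]
    (W : V → Set ℝ) (t : V → V → ℝ)
    (hsingle : ∀ v : V, (W v).Nonempty)
    (S S' : Multiset (List V))
    (hS : FeasSol W t S) (hS' : FeasSol W t S') :
    Relation.ReflTransGen (fun A B => MoveStep A B ∧ FeasSol W t B) S S' := by
  have h1 := reach_canonical W t hsingle _ S hS rfl
  have h2 := reach_canonical W t hsingle _ S' hS' rfl
  exact h1.trans (chain_rev W t hS' h2).2
end
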